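/- Let κ and λ be infinite cardinals with κ regular, κ ≤ λ, and λ ≥ 𝔠. Let X ⊆ ᵏλ be a subspace of weight at most λ, and let (X, 𝔐, μ) be a weak λ⁺-measure space, over any positively totally ordered monoid S, which is ω₁-Dirac, i.e., supp(μ) is second countable. Then for every open set U ⊆ X with μ(U) > 0 there is x ∈ U such that either {x} ∉ 𝔐 or μ({x}) > 0. -/

import Mathlib

open Cardinal Set

noncomputable section

/-- The type of `ι`-indexed sequences in `A`, as a type synonym carrying the bounded topology. -/
def GSeq (ι A : Type) : Type := ι → A

/-- The bounded topology on `GSeq ι A`: the topology generated by the cones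
`N_s = {y | ∀ i < b, y i = x i}`. -/
instance GSeq.topologicalSpace (ι A : Type) [LinearOrder ι] : TopologicalSpace (GSeq ι A) :=
  TopologicalSpace.generateFrom
    {C : Set (GSeq ι A) | ∃ (x : ι → A) (b : ι), C = {y : GSeq ι A | ∀ i, i < b → y i = x i}}

/-- The weight of a topological space: the least cardinality of a basis for its topology. -/
def tweight (X : Type) [TopologicalSpace X] : Cardinal :=
  ⨅ B : {B : Set (Set X) // TopologicalSpace.IsTopologicalBasis B}, #↥(B.1)

/-- `S` is a positively totally ordered monoid (on top of given `AddMonoid` and `LinearOrder`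
structures): the addition is weakly monotone in both arguments, `0` is the least element, and
the positive cone `S⁺ = {a | 0 < a}` is nonempty. -/
structure IsPTOM (S : Type*) [AddMonoid S] [LinearOrder S] : Prop where
  add_le_add : ∀ a b c d : S, a ≤ b → c ≤ d → a + c ≤ b + d
  zero_le : ∀ a : S, 0 ≤ a
  exists_pos : ∃ a : S, 0 < a

/-- The sum of `f` over a finite set `F` of indices, taken in increasing order of the indices. -/
def finSum {ι : Type*} [LinearOrder ι] {S : Type*} [AddMonoid S] (f : ι → S) (F : Finset ι) : S :=
  ((F.sort (· ≤ ·)).map f).sum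

/-- `μ` is a continuous measure: every singleton is measurable and has measure `0`. -/
def MeasureContinuous {X : Type} [TopologicalSpace X] {S : Type*} [Zero S]
    (M : Set (Set X)) (μ : Set X → S) : Prop :=
  ∀ x : X, {x} ∈ M ∧ μ {x} = 0

/-- `(X, M, μ)` is a weak `λ⁺`-measure space (with `lam` playing the role of `λ`):
`M` contains all open sets and is closed under unions of at most `lam` many sets,
and `μ` satisfies the axioms (M1)-(M5). -/
structure IsWeakMeasureSpace (X : Type) [TopologicalSpace X] (lam : Cardinal)
    (S : Type*) [AddMonoid S] [LinearOrder S] (M : Set (Set X)) (μ : Set X → S) : Prop where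
  open_mem : ∀ U : Set X, IsOpen U → U ∈ M
  sUnion_mem : ∀ 𝒜 : Set (Set X), 𝒜 ⊆ M → #↥𝒜 ≤ lam → ⋃₀ 𝒜 ∈ M
  measure_empty : μ ∅ = 0
  measure_univ_pos : 0 < μ Set.univ
  mono : ∀ A B : Set X, A ∈ M → B ∈ M → A ⊆ B → μ A ≤ μ B
  additive : ∀ (γ : Ordinal) (A : γ.ToType → Set X), γ.card ≤ lam →
    (∀ i, A i ∈ M) → Pairwise (Function.onFun Disjoint A) →
    IsLUB {s : S | ∃ F : Finset γ.ToType, s = finSum (fun i => μ (A i)) F} (μ (⋃ i, A i))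
  point_reg : ∀ (x : X) (γ : Ordinal) (A : γ.ToType → Set X),
    {x} ∈ M → γ.card ≤ lam →
    (∀ i, IsOpen (A i) ∧ x ∈ A i) →
    (∀ U : Set X, IsOpen U → x ∈ U → ∃ i, A i ⊆ U) →
    IsGLB (Set.range fun i => μ (A i)) (μ {x})

/-- The support of `μ`: the complement of the union of all open sets of measure `0`. -/
def msupp {X : Type} [TopologicalSpace X] {S : Type*} [Zero S] (μ : Set X → S) : Set X :=
  (⋃₀ {U : Set X | IsOpen U ∧ μ U = 0})ᶜ

/-!
Suppose every point of `U` is measurable and null. Points of the support are at most `𝔠 ≤ λ`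
many, since the support is second countable and Hausdorff. Off the support, every point lies in a
null cone; the null cones of minimal length at their points are pairwise equal or disjoint, because
any two cones in `ᵏλ` are nested or disjoint, and there are at most `λ` of them, since each
contains its own basic open set. Hence `U` is covered by at most `λ` pairwise disjoint null
sets, and (M4) forces `μ U = 0`.
-/

namespace GSeq

variable {ι A : Type} [LinearOrder ι]

def cone (x : GSeq ι A) (b : ι) : Set (GSeq ι A) :=
  {y | ∀ i < b, y i = x i}

theorem isOpen_cone (x : GSeq ι A) (b : ι) : IsOpen (cone x b) :=
  TopologicalSpace.isOpen_generateFrom_of_mem ⟨x, b, rfl⟩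

theorem mem_cone_self (x : GSeq ι A) (b : ι) : x ∈ cone x b := fun _ _ => rfl

theorem cone_antitone (x : GSeq ι A) : Antitone (cone x) :=
  fun _ _ hbc _ hy i hi => hy i (hi.trans_le hbc)

theorem cone_eq_of_mem {x y : GSeq ι A} {b : ι} (h : y ∈ cone x b) : cone y b = cone x b := by
  ext z
  exact forall₂_congr fun i hi => by rw [h i hi]

theorem exists_cone_subset_of_isOpen [Nonempty ι] {V : Set (GSeq ι A)} (hV : IsOpen V) :
    ∀ x ∈ V, ∃ b, cone x b ⊆ V := by
  induction hV with
  | basic V hV =>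
    obtain ⟨y, b, rfl⟩ := hV
    exact fun x hx => ⟨b, (cone_eq_of_mem (x := y) hx).subset⟩
  | univ => exact fun _ _ => ⟨Classical.arbitrary ι, subset_univ _⟩
  | inter V W _ _ ihV ihW =>
    intro x hx
    obtain ⟨b, hb⟩ := ihV x hx.1
    obtain ⟨c, hc⟩ := ihW x hx.2
    exact ⟨max b c, subset_inter ((cone_antitone x (le_max_left b c)).trans hb)
      ((cone_antitone x (le_max_right b c)).trans hc)⟩
  | sUnion 𝒱 _ ih =>
    rintro x ⟨V, hV, hxV⟩
    obtain ⟨b, hb⟩ := ih V hV x hxV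
    exact ⟨b, hb.trans (subset_sUnion_of_mem hV)⟩

instance [NoMaxOrder ι] : T2Space (GSeq ι A) where
  t2 x y hxy := by
    obtain ⟨i, hi⟩ := Function.ne_iff.1 hxy
    obtain ⟨b, hib⟩ := exists_gt i
    refine ⟨cone x b, cone y b, isOpen_cone x b, isOpen_cone y b, mem_cone_self x b,
      mem_cone_self y b, Set.disjoint_left.2 fun z hzx hzy => hi ?_⟩
    rw [← hzx i hib, hzy i hib]

def IsMinimalCone (P : Set (GSeq ι A) → Prop) (C : Set (GSeq ι A)) : Prop :=
  ∃ x b, C = cone x b ∧ P (cone x b) ∧ ∀ c < b, ¬ P (cone x c)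

variable {P : Set (GSeq ι A) → Prop}

theorem exists_isMinimalCone_mem [WellFoundedLT ι] {x : GSeq ι A} {b : ι} (h : P (cone x b)) :
    ∃ C, IsMinimalCone P C ∧ x ∈ C := by
  obtain ⟨c, hc, hmin⟩ := wellFounded_lt.has_min {c | P (cone x c)} ⟨b, h⟩
  exact ⟨cone x c, ⟨x, c, rfl, hc, fun d hd hP => hmin d hP hd⟩, mem_cone_self x c⟩

theorem cone_eq_of_le_of_not_disjoint {x y : GSeq ι A} {b c : ι}
    (hb : P (cone x b)) (hc : ∀ d < c, ¬ P (cone y d)) (hbc : b ≤ c)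
    (hxy : ¬ Disjoint (cone x b) (cone y c)) : cone x b = cone y c := by
  obtain ⟨z, hzx, hzy⟩ := Set.not_disjoint_iff.1 hxy
  have hyb : cone y b = cone x b :=
    (cone_eq_of_mem (cone_antitone y hbc hzy)).symm.trans (cone_eq_of_mem hzx)
  obtain rfl : b = c := hbc.eq_of_not_lt fun hlt => hc b hlt (hyb ▸ hb)
  exact hyb.symm

theorem IsMinimalCone.eq_or_disjoint {C C' : Set (GSeq ι A)} (hC : IsMinimalCone P C)
    (hC' : IsMinimalCone P C') : C = C' ∨ Disjoint C C' := by
  obtain ⟨x, b, rfl, hb, hbmin⟩ := hC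
  obtain ⟨y, c, rfl, hc, hcmin⟩ := hC'
  refine or_iff_not_imp_right.2 fun hxy => ?_
  rcases le_total b c with hbc | hcb
  · exact cone_eq_of_le_of_not_disjoint hb hcmin hbc hxy
  · exact (cone_eq_of_le_of_not_disjoint hc hbmin hcb fun h => hxy h.symm).symm

end GSeq

open TopologicalSpace in
theorem mk_le_continuum_of_secondCountable (X : Type) [TopologicalSpace X] [T0Space X]
    [SecondCountableTopology X] : #X ≤ 𝔠 := by
  have hinj : Function.Injective fun x : X => {s : countableBasis X | x ∈ (s : Set X)} :=
    fun x y hxy => (isBasis_countableBasis X).eq_iff.2 fun s hs =>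
      Set.ext_iff.1 hxy ⟨s, hs⟩
  calc #X ≤ #(Set (countableBasis X)) := mk_le_of_injective hinj
    _ = 2 ^ #(countableBasis X) := mk_set
    _ ≤ 2 ^ ℵ₀ := power_le_power_left two_ne_zero
      (countable_countableBasis X).le_aleph0
    _ = 𝔠 := two_power_aleph0

open TopologicalSpace in
theorem exists_isTopologicalBasis_mk_eq_tweight (X : Type) [TopologicalSpace X] :
    ∃ B : Set (Set X), IsTopologicalBasis B ∧ #B = tweight X := by
  have : Nonempty {B : Set (Set X) // IsTopologicalBasis B} := ⟨⟨_, isTopologicalBasis_opens⟩⟩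
  obtain ⟨B, hB⟩ := ciInf_mem fun B : {B : Set (Set X) // IsTopologicalBasis B} => #B.1
  exact ⟨B.1, B.2, hB⟩

theorem TopologicalSpace.IsTopologicalBasis.mk_le_of_pairwiseDisjoint {X : Type}
    [TopologicalSpace X] {B : Set (Set X)} (hB : IsTopologicalBasis B) {𝒰 : Set (Set X)}
    (hdisj : 𝒰.PairwiseDisjoint id) (hopen : ∀ U ∈ 𝒰, IsOpen U ∧ U.Nonempty) : #𝒰 ≤ #B := by
  have hbasic : ∀ U : 𝒰, ∃ b ∈ B, b.Nonempty ∧ b ⊆ U := fun U => by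
    obtain ⟨x, hx⟩ := (hopen U U.2).2
    obtain ⟨b, hbB, hxb, hbU⟩ := hB.exists_subset_of_mem_open hx (hopen U U.2).1
    exact ⟨b, hbB, ⟨x, hxb⟩, hbU⟩
  choose b hbB hbne hbU using hbasic
  refine mk_le_of_injective (f := fun U => (⟨b U, hbB U⟩ : B)) fun U V hUV => Subtype.ext ?_
  have hbUV : b U = b V := congrArg Subtype.val hUV
  obtain ⟨x, hx⟩ := hbne U
  exact hdisj.elim U.2 V.2 (Set.not_disjoint_iff.2 ⟨x, hbU U hx, hbU V (hbUV ▸ hx)⟩)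

theorem finSum_eq_zero {ι : Type*} [LinearOrder ι] {S : Type*} [AddMonoid S] {f : ι → S}
    {F : Finset ι} (h : ∀ i ∈ F, f i = 0) : finSum f F = 0 :=
  List.sum_eq_zero fun _ hs => by
    obtain ⟨i, hi, rfl⟩ := List.mem_map.1 hs
    exact h i ((F.mem_sort _).1 hi)

theorem subset_compl_msupp {X : Type} [TopologicalSpace X] {S : Type*} [Zero S]
    {μ : Set X → S} {U : Set X} (hU : IsOpen U) (hμU : μ U = 0) : U ⊆ (msupp μ)ᶜ := by
  rw [msupp, compl_compl]
  exact subset_sUnion_of_mem ⟨hU, hμU⟩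

namespace IsWeakMeasureSpace

variable {X : Type} [TopologicalSpace X] {lam : Cardinal} {S : Type*} [AddMonoid S] [LinearOrder S]
  {M : Set (Set X)} {μ : Set X → S}

theorem measure_sUnion_eq_zero (hμ : IsWeakMeasureSpace X lam S M μ) {𝒜 : Set (Set X)}
    (hM : 𝒜 ⊆ M) (hcard : #𝒜 ≤ lam) (hdisj : 𝒜.PairwiseDisjoint id) (h0 : ∀ A ∈ 𝒜, μ A = 0) :
    μ (⋃₀ 𝒜) = 0 := by
  obtain ⟨e⟩ : Nonempty ((#𝒜).ord.ToType ≃ 𝒜) := Cardinal.eq.1 (mk_ord_toType _)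
  have hlub := hμ.additive (#𝒜).ord (fun i => e i) (by rwa [card_ord])
    (fun i => hM (e i).2) fun i j hij =>
      hdisj (e i).2 (e j).2 fun h => hij (e.injective (Subtype.ext h))
  have hsums : {s : S | ∃ F, s = finSum (fun i => μ (e i)) F} = {0} :=
    Set.eq_singleton_iff_unique_mem.2 ⟨⟨∅, by simp [finSum]⟩,
      fun _ ⟨_, hs⟩ => hs ▸ finSum_eq_zero fun i _ => h0 _ (e i).2⟩
  rw [hsums, e.surjective.iUnion_comp fun A : 𝒜 => (A : Set X), ← sUnion_eq_iUnion] at hlub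
  exact hlub.unique isLUB_singleton

theorem measure_eq_zero_of_subset (hμ : IsWeakMeasureSpace X lam S M μ) (hS : IsPTOM S)
    {U V : Set X} (hU : IsOpen U) (hV : IsOpen V) (hUV : U ⊆ V) (hμV : μ V = 0) : μ U = 0 :=
  le_antisymm (hμV ▸ hμ.mono U V (hμ.open_mem U hU) (hμ.open_mem V hV) hUV) (hS.zero_le _)

theorem measure_eq_zero_of_cover (hμ : IsWeakMeasureSpace X lam S M μ) (hS : IsPTOM S)
    (hlam : ℵ₀ ≤ lam) (hsupp : #(msupp μ) ≤ lam) {𝒟 : Set (Set X)}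
    (h𝒟disj : 𝒟.PairwiseDisjoint id)
    (h𝒟 : ∀ D ∈ 𝒟, IsOpen D ∧ μ D = 0) (hcover : (msupp μ)ᶜ ⊆ ⋃₀ 𝒟) (h𝒟card : #𝒟 ≤ lam)
    {U : Set X} (hU : U ∈ M) (hsing : ∀ x ∈ U, {x} ∈ M ∧ μ {x} = 0) : μ U = 0 := by
  let 𝒮 : Set (Set X) := (fun x => {x}) '' (U ∩ msupp μ)
  have hM : 𝒮 ∪ 𝒟 ⊆ M := by
    rintro D (⟨x, hx, rfl⟩ | hD)
    exacts [(hsing x hx.1).1, hμ.open_mem D (h𝒟 D hD).1]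
  have hcard : #(𝒮 ∪ 𝒟 : Set (Set X)) ≤ lam := by
    have h𝒮card : #𝒮 ≤ lam :=
      mk_image_le.trans ((mk_le_mk_of_subset inter_subset_right).trans hsupp)
    exact (mk_union_le 𝒮 𝒟).trans ((add_le_add h𝒮card h𝒟card).trans (add_eq_self hlam).le)
  have hdisj : (𝒮 ∪ 𝒟).PairwiseDisjoint id := by
    refine PairwiseDisjoint.union ?_ h𝒟disj ?_
    · rintro _ ⟨x, -, rfl⟩ _ ⟨y, -, rfl⟩ hxy
      exact disjoint_singleton.2 fun h => hxy (h ▸ rfl)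
    · rintro _ ⟨x, hx, rfl⟩ D hD -
      exact disjoint_singleton_left.2 fun hxD =>
        subset_compl_msupp (h𝒟 D hD).1 (h𝒟 D hD).2 hxD hx.2
  have hU𝒜 : U ⊆ ⋃₀ (𝒮 ∪ 𝒟) := fun x hx => by
    by_cases hxs : x ∈ msupp μ
    · exact ⟨{x}, Or.inl ⟨x, ⟨hx, hxs⟩, rfl⟩, rfl⟩
    · obtain ⟨D, hD, hxD⟩ := hcover hxs
      exact ⟨D, Or.inr hD, hxD⟩
  have h0 : μ (⋃₀ (𝒮 ∪ 𝒟)) = 0 := hμ.measure_sUnion_eq_zero hM hcard hdisj <| by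
    rintro D (⟨x, hx, rfl⟩ | hD)
    exacts [(hsing x hx.1).2, (h𝒟 D hD).2]
  exact le_antisymm (h0 ▸ hμ.mono U _ hU (hμ.sUnion_mem _ hM hcard) hU𝒜) (hS.zero_le _)

end IsWeakMeasureSpace

theorem exists_pairwiseDisjoint_null_open_cover_compl_msupp {ι A : Type} [LinearOrder ι]
    [WellFoundedLT ι] [Nonempty ι] {X : Set (GSeq ι A)} {lam : Cardinal} {S : Type*}
    [AddMonoid S] [LinearOrder S] (hS : IsPTOM S) {M : Set (Set X)} {μ : Set X → S}
    (hμ : IsWeakMeasureSpace X lam S M μ) :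
    ∃ 𝒟 : Set (Set X), 𝒟.PairwiseDisjoint id ∧ (∀ D ∈ 𝒟, IsOpen D ∧ D.Nonempty ∧ μ D = 0) ∧
      (msupp μ)ᶜ ⊆ ⋃₀ 𝒟 := by
  let P : Set (GSeq ι A) → Prop := fun C => μ (Subtype.val ⁻¹' C) = 0
  refine ⟨{D | D.Nonempty ∧ ∃ C, GSeq.IsMinimalCone P C ∧ D = Subtype.val ⁻¹' C}, ?_, ?_, ?_⟩
  · rintro _ ⟨-, C, hC, rfl⟩ _ ⟨-, C', hC', rfl⟩ hne
    rcases hC.eq_or_disjoint hC' with rfl | hdisj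
    · exact absurd rfl hne
    · exact hdisj.preimage _
  · rintro _ ⟨hne, C, hC, rfl⟩
    obtain ⟨x, b, rfl, hP, -⟩ := hC
    exact ⟨(GSeq.isOpen_cone x b).preimage continuous_subtype_val, hne, hP⟩
  · intro y hy
    rw [msupp, compl_compl] at hy
    obtain ⟨V, ⟨hV, hμV⟩, hyV⟩ := hy
    obtain ⟨W, hW, rfl⟩ := isOpen_induced_iff.1 hV
    obtain ⟨b, hbW⟩ := GSeq.exists_cone_subset_of_isOpen hW y hyV
    have hb : P (GSeq.cone y b) := hμ.measure_eq_zero_of_subset hS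
      ((GSeq.isOpen_cone _ b).preimage continuous_subtype_val) hV (preimage_mono hbW) hμV
    obtain ⟨C, hC, hyC⟩ := GSeq.exists_isMinimalCone_mem hb
    exact ⟨_, ⟨⟨y, hyC⟩, C, hC, rfl⟩, hyC⟩

theorem statement_8_general (κ lam : Cardinal) (hκ : κ.IsRegular) (hlam : ℵ₀ ≤ lam)
    (hc : Cardinal.continuum ≤ lam)
    (X : Set (GSeq κ.ord.ToType lam.ord.ToType)) (hw : tweight ↥X ≤ lam)
    (S : Type) [AddMonoid S] [LinearOrder S] (hS : IsPTOM S)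
    (M : Set (Set ↥X)) (μ : Set ↥X → S)
    (hμ : IsWeakMeasureSpace ↥X lam S M μ)
    (hdirac : SecondCountableTopology ↥(msupp μ)) :
    ∀ U : Set ↥X, IsOpen U → 0 < μ U →
      ∃ x ∈ U, ({x} : Set ↥X) ∉ M ∨ 0 < μ {x} := by
  intro U hU hμU
  by_contra! hsing
  have : Nonempty κ.ord.ToType := Ordinal.nonempty_toType_iff.2 (ord_eq_zero.not.2 hκ.pos.ne')
  have : NoMaxOrder κ.ord.ToType := Cardinal.noMaxOrder hκ.aleph0_le
  obtain ⟨𝒟, h𝒟disj, h𝒟, hcover⟩ := exists_pairwiseDisjoint_null_open_cover_compl_msupp hS hμ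
  obtain ⟨B, hB, hBcard⟩ := exists_isTopologicalBasis_mk_eq_tweight X
  have h𝒟card : #𝒟 ≤ lam :=
    (hB.mk_le_of_pairwiseDisjoint h𝒟disj fun D hD => ⟨(h𝒟 D hD).1, (h𝒟 D hD).2.1⟩).trans
      (hBcard.trans_le hw)
  have hsupp : #(msupp μ) ≤ lam := (mk_le_continuum_of_secondCountable _).trans hc
  refine hμU.ne' (hμ.measure_eq_zero_of_cover hS hlam hsupp h𝒟disj
    (fun D hD => ⟨(h𝒟 D hD).1, (h𝒟 D hD).2.2⟩) hcover h𝒟card (hμ.open_mem U hU) fun x hx => ?_)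
  exact ⟨(hsing x hx).1, le_antisymm (hsing x hx).2 (hS.zero_le _)⟩

/-- assume `λ ≥ 𝔠`. If `(X, 𝔐, μ)` is an `ω₁`-Dirac weak `λ⁺`-measure space on
some `X ⊆ ᵏλ` of weight at most `λ` (over any positively totally ordered monoid), then every
open `U` of positive measure contains a point that is either non-measurable or of positive
measure. -/
theorem statement_8 (κ lam : Cardinal) (hκ : κ.IsRegular) (hκlam : κ ≤ lam) (hlam : ℵ₀ ≤ lam)
    (hc : Cardinal.continuum ≤ lam)
    (X : Set (GSeq κ.ord.ToType lam.ord.ToType)) (hw : tweight ↥X ≤ lam)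
    (S : Type) [AddMonoid S] [LinearOrder S] (hS : IsPTOM S)
    (M : Set (Set ↥X)) (μ : Set ↥X → S)
    (hμ : IsWeakMeasureSpace ↥X lam S M μ)
    (hdirac : SecondCountableTopology ↥(msupp μ)) :
    ∀ U : Set ↥X, IsOpen U → 0 < μ U →
      ∃ x ∈ U, ({x} : Set ↥X) ∉ M ∨ 0 < μ {x} :=
  statement_8_general κ lam hκ hlam hc X hw S hS M μ hμ hdirac
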